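/- arXiv:2009.02948 — 3 statements merged into one kernel-verified Lean document; each statement's English description precedes it below -/
import Mathlib

section
/- Let A = [[0,1,0],[0,0,1],[0,0,0]] ∈ ℝ^{3×3}, b = (0,0,1)ᵀ, c = (1,0,0)ᵀ, d = (0,1,0)ᵀ, and l(ω) = (3ω, 3ω², ω³)ᵀ. Fix p ≥ 2, ω₁ > 0, α > 1, set ω_j = α^{j−1}·ω₁ and l_j = l(ω_j). Let b̂ ≠ 0, let μ, n, e, F* : ℝ → ℝ with e twice differentiable, F* differentiable, e'' = F* − b̂μ, z = (e, e', F*)ᵀ, y = e − n, and let ξ₁, …, ξ_p : ℝ → ℝ³ be differentiable and satisfy ξ₁' = Aξ₁ − d·b̂μ + l₁(y − cᵀξ₁) and ξ_i' = Aξ_i + d·(−b̂μ + bᵀ∑_{j=1}^{i−1} ξ_j) + l_i·cᵀ(ξ_{i−1} − ξ_i) for i = 2, …, p. Define ζ̃_i = z − ξ_i − b·(bᵀ∑_{j=1}^{i−1} ξ_j). Then for every i ∈ {2, …, p}: ζ̃_i'(t) = (A − l_i·cᵀ)·ζ̃_i(t) + (l_i − b·(bᵀl_{i−1}))·cᵀζ̃_{i−1}(t)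 − b·∑_{j=1}^{i−2} (bᵀl_j − bᵀl_{j+1})·cᵀζ̃_j(t) + b·(bᵀl₁)·n(t) + b·(F*)'(t). -/
/-!
Because `A b = d`, the correction `b (bᵀ ∑_{j<i} ξⱼ)` in `ζ̃ᵢ` turns `A (z - ξᵢ)` and the `d`-term of
the level-`i` observer equation into `A ζ̃ᵢ`, and because `cᵀ b = 0` we have
`cᵀ (ξᵢ₋₁ - ξᵢ) = cᵀ ζ̃ᵢ - cᵀ ζ̃ᵢ₋₁`. Since `bᵀ A = 0` and `bᵀ d = 0`, the third components of the
observer derivatives are `bᵀ ξⱼ' = bᵀ lⱼ (cᵀ ζ̃ⱼ - cᵀ ζ̃ⱼ₋₁)`, with the noise `n` in place of `cᵀ ζ̃₀`;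
summing them by parts gives the coupling terms.
-/

open Matrix

noncomputable section

/-- System matrix `A` of the extended error-domain state. -/
def Amat : Matrix (Fin 3) (Fin 3) ℝ := !![0,1,0; 0,0,1; 0,0,0]

/-- Vector `b = (0,0,1)ᵀ`. -/
def bvec : Fin 3 → ℝ := ![0,0,1]

/-- Vector `c = (1,0,0)ᵀ`. -/
def cvec : Fin 3 → ℝ := ![1,0,0]

/-- Vector `d = (0,1,0)ᵀ`. -/
def dvec : Fin 3 → ℝ := ![0,1,0]

/-- Bandwidth-parameterized observer gain `l(ω) = (3ω, 3ω², ω³)ᵀ`. -/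
def gain (ω : ℝ) : Fin 3 → ℝ := ![3 * ω, 3 * ω ^ 2, ω ^ 3]

/-- Level-`i` observation error `ζ̃ᵢ = z − ξᵢ − b (bᵀ ∑_{j=1}^{i-1} ξⱼ)`. -/
def zetaErr (e e' F : ℝ → ℝ) (ξ : ℕ → ℝ → Fin 3 → ℝ) (i : ℕ) (t : ℝ) : Fin 3 → ℝ :=
  ![e t, e' t, F t] - ξ i t - (bvec ⬝ᵥ ∑ j ∈ Finset.Icc 1 (i - 1), ξ j t) • bvec

open Finset

theorem sum_Ioc_mul_sub_eq {R : Type*} [CommRing R] (g a : ℕ → R) (a₀ : R) {k : ℕ}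
    (hk : 1 ≤ k) :
    g 1 * (a 1 - a₀) + ∑ j ∈ Ioc 1 k, g j * (a j - a (j - 1)) =
      g k * a k + ∑ j ∈ Icc 1 (k - 1), (g j - g (j + 1)) * a j - g 1 * a₀ := by
  induction k, hk using Nat.le_induction with
  | base => simp [mul_sub]
  | succ k hk ih =>
    obtain ⟨m, rfl⟩ : ∃ m, k = m + 1 := ⟨k - 1, by omega⟩
    rw [sum_Ioc_succ_top (by omega), ← add_assoc, ih, Nat.add_sub_cancel, Nat.add_sub_cancel,
      sum_Icc_succ_top hk]
    ring

namespace CascadeObserver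

variable {ι : Type*} [Fintype ι]

/-- `ζ̃ᵢ` at a single time, for the state `z` and observer states `ξ`; `zetaErr e e' F ξ i t` is
`error bvec ![e t, e' t, F t] (ξ · t) i`. -/
def error (b z : ι → ℝ) (ξ : ℕ → ι → ℝ) (i : ℕ) : ι → ℝ :=
  z - ξ i - (b ⬝ᵥ ∑ j ∈ Icc 1 (i - 1), ξ j) • b

/-- `ξ'` is the right-hand side of the cascade observer at a single time, with `u = b̂ μ` and `y`
the measurement. -/
structure IsObserverRHS (A : Matrix ι ι ℝ) (b c d : ι → ℝ) (L : ℕ → ι → ℝ) (u y : ℝ)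
    (ξ ξ' : ℕ → ι → ℝ) (p : ℕ) : Prop where
  deriv_one : ξ' 1 = A *ᵥ ξ 1 - u • d + (y - c ⬝ᵥ ξ 1) • L 1
  deriv_of_two_le : ∀ i, 2 ≤ i → i ≤ p →
    ξ' i = A *ᵥ ξ i + (-u + b ⬝ᵥ ∑ j ∈ Icc 1 (i - 1), ξ j) • d + (c ⬝ᵥ (ξ (i - 1) - ξ i)) • L i

theorem hasDerivAt_error (b : ι → ℝ) {z : ℝ → ι → ℝ} {z' : ι → ℝ} {ξ : ℕ → ℝ → ι → ℝ}
    {ξ' : ℕ → ι → ℝ} {i : ℕ} {t : ℝ} (hi : 1 ≤ i) (hz : HasDerivAt z z' t)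
    (hξ : ∀ j, 1 ≤ j → j ≤ i → HasDerivAt (ξ j) (ξ' j) t) :
    HasDerivAt (fun s ↦ error b (z s) (fun j ↦ ξ j s) i) (error b z' ξ' i) t := by
  have hsum : HasDerivAt (fun s ↦ ∑ j ∈ Icc 1 (i - 1), ξ j s) (∑ j ∈ Icc 1 (i - 1), ξ' j) t :=
    HasDerivAt.fun_sum fun j hj ↦ hξ j (mem_Icc.1 hj).1 (by grind)
  have hdot : HasDerivAt (fun s ↦ b ⬝ᵥ ∑ j ∈ Icc 1 (i - 1), ξ j s)
      (b ⬝ᵥ ∑ j ∈ Icc 1 (i - 1), ξ' j) t :=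
    HasDerivAt.fun_sum fun k _ ↦ (hasDerivAt_pi.1 hsum k).const_mul (b k)
  exact (hz.sub (hξ i hi le_rfl)).sub (hdot.smul_const b)

variable {A : Matrix ι ι ℝ} {b c d : ι → ℝ}

theorem dotProduct_error (hcb : c ⬝ᵥ b = 0) (z : ι → ℝ) (ξ : ℕ → ι → ℝ) (i : ℕ) :
    c ⬝ᵥ error b z ξ i = c ⬝ᵥ z - c ⬝ᵥ ξ i := by
  simp [error, dotProduct_sub, hcb]

theorem mulVec_error (hAb : A *ᵥ b = d) (z : ι → ℝ) (ξ : ℕ → ι → ℝ) (i : ℕ) :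
    A *ᵥ error b z ξ i = A *ᵥ (z - ξ i) - (b ⬝ᵥ ∑ j ∈ Icc 1 (i - 1), ξ j) • d := by
  rw [error, mulVec_sub, mulVec_smul, hAb]

variable {L : ℕ → ι → ℝ} {u n : ℝ} {z : ι → ℝ} {ξ ξ' : ℕ → ι → ℝ} {p : ℕ}

theorem IsObserverRHS.dotProduct_sum_deriv (hbA : b ᵥ* A = 0) (hbd : b ⬝ᵥ d = 0)
    (hcb : c ⬝ᵥ b = 0) (hobs : IsObserverRHS A b c d L u (c ⬝ᵥ z - n) ξ ξ' p) {k : ℕ}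
    (hk : 1 ≤ k) (hkp : k ≤ p) :
    b ⬝ᵥ ∑ j ∈ Icc 1 k, ξ' j =
      (b ⬝ᵥ L k) * (c ⬝ᵥ error b z ξ k)
        + ∑ j ∈ Icc 1 (k - 1), (b ⬝ᵥ L j - b ⬝ᵥ L (j + 1)) * (c ⬝ᵥ error b z ξ j)
        - (b ⬝ᵥ L 1) * n := by
  have hbAv : ∀ v, b ⬝ᵥ A *ᵥ v = 0 := fun v ↦ by rw [dotProduct_mulVec, hbA, zero_dotProduct]
  have h1 : b ⬝ᵥ ξ' 1 = (b ⬝ᵥ L 1) * (c ⬝ᵥ error b z ξ 1 - n) := by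
    rw [hobs.deriv_one, dotProduct_error hcb]
    simp only [dotProduct_add, dotProduct_sub, dotProduct_smul, hbAv, hbd, smul_eq_mul]
    ring
  have hj : ∀ j ∈ Ioc 1 k, b ⬝ᵥ ξ' j =
      (b ⬝ᵥ L j) * (c ⬝ᵥ error b z ξ j - c ⬝ᵥ error b z ξ (j - 1)) := fun j hj ↦ by
    obtain ⟨hj1, hjk⟩ := mem_Ioc.1 hj
    rw [hobs.deriv_of_two_le j hj1 (hjk.trans hkp), dotProduct_error hcb, dotProduct_error hcb]
    simp only [dotProduct_add, dotProduct_sub, dotProduct_smul, hbAv, hbd, smul_eq_mul]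
    ring
  rw [dotProduct_sum, ← add_sum_Ioc_eq_sum_Icc hk, h1, sum_congr rfl hj]
  exact sum_Ioc_mul_sub_eq (fun j ↦ b ⬝ᵥ L j) (fun j ↦ c ⬝ᵥ error b z ξ j) n hk

theorem IsObserverRHS.error_deriv_eq (hAb : A *ᵥ b = d) (hbA : b ᵥ* A = 0) (hbd : b ⬝ᵥ d = 0)
    (hcb : c ⬝ᵥ b = 0) {w : ℝ} {z' : ι → ℝ} (hz' : z' = A *ᵥ z - u • d + w • b)
    (hobs : IsObserverRHS A b c d L u (c ⬝ᵥ z - n) ξ ξ' p) {i : ℕ} (hi : 2 ≤ i) (hip : i ≤ p) :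
    error b z' ξ' i =
      (A - vecMulVec (L i) c) *ᵥ error b z ξ i
        + (c ⬝ᵥ error b z ξ (i - 1)) • (L i - (b ⬝ᵥ L (i - 1)) • b)
        - ∑ j ∈ Icc 1 (i - 2),
            ((b ⬝ᵥ L j - b ⬝ᵥ L (j + 1)) * (c ⬝ᵥ error b z ξ j)) • b
        + ((b ⬝ᵥ L 1) * n) • b + w • b := by
  obtain ⟨k, rfl⟩ : ∃ k, i = k + 1 := ⟨i - 1, by omega⟩
  have hcξ : c ⬝ᵥ (ξ k - ξ (k + 1)) = c ⬝ᵥ error b z ξ (k + 1) - c ⬝ᵥ error b z ξ k := by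
    rw [dotProduct_error hcb, dotProduct_error hcb, dotProduct_sub]
    ring
  rw [error, hz', hobs.deriv_of_two_le _ hi hip, Nat.add_sub_cancel,
    hobs.dotProduct_sum_deriv hbA hbd hcb (by omega) (by omega), sub_mulVec, vecMulVec_mulVec,
    op_smul_eq_smul, mulVec_error hAb, hcξ, show k + 1 - 2 = k - 1 by omega, ← sum_smul,
    Nat.add_sub_cancel, mulVec_sub]
  module

end CascadeObserver

theorem Amat_mulVec_bvec : Amat *ᵥ bvec = dvec := by
  ext k; fin_cases k <;> simp [Amat, bvec, dvec, mulVec, dotProduct, Fin.sum_univ_three]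

theorem bvec_vecMul_Amat : bvec ᵥ* Amat = 0 := by
  ext k; fin_cases k <;> simp [Amat, bvec, vecMul, dotProduct, Fin.sum_univ_three]

theorem bvec_dotProduct_dvec : bvec ⬝ᵥ dvec = 0 := by
  simp [bvec, dvec, dotProduct, Fin.sum_univ_three]

theorem cvec_dotProduct_bvec : cvec ⬝ᵥ bvec = 0 := by
  simp [bvec, cvec, dotProduct, Fin.sum_univ_three]

theorem hasDerivAt_vecCons_three {f g h : ℝ → ℝ} {f' g' h' t : ℝ} (hf : HasDerivAt f f' t)
    (hg : HasDerivAt g g' t) (hh : HasDerivAt h h' t) :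
    HasDerivAt (fun s ↦ ![f s, g s, h s]) ![f', g', h'] t := by
  refine hasDerivAt_pi.2 fun k ↦ ?_
  fin_cases k
  exacts [hf, hg, hh]

theorem Amat_mulVec_vecCons (x y w : ℝ) : Amat *ᵥ ![x, y, w] = ![y, w, 0] := by
  ext k; fin_cases k <;> simp [Amat, mulVec, dotProduct, Fin.sum_univ_three]

theorem cascade_observation_error_dynamics_general
    (p : ℕ) (ω₁ : ℝ) (α : ℝ)
    (bhat : ℝ)
    (μ n e e' e'' F F' : ℝ → ℝ)
    (he : ∀ t : ℝ, HasDerivAt e (e' t) t)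
    (he' : ∀ t : ℝ, HasDerivAt e' (e'' t) t)
    (hF : ∀ t : ℝ, HasDerivAt F (F' t) t)
    (hdyn : ∀ t : ℝ, e'' t = F t - bhat * μ t)
    (ξ ξ' : ℕ → ℝ → Fin 3 → ℝ)
    (hξ : ∀ i : ℕ, 1 ≤ i → i ≤ p → ∀ t : ℝ, HasDerivAt (ξ i) (ξ' i t) t)
    (hobs1 : ∀ t : ℝ, ξ' 1 t =
      Amat.mulVec (ξ 1 t) - (bhat * μ t) • dvec
        + (((e t - n t) - cvec ⬝ᵥ ξ 1 t)) • gain (α ^ (1 - 1) * ω₁))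
    (hobsi : ∀ i : ℕ, 2 ≤ i → i ≤ p → ∀ t : ℝ, ξ' i t =
      Amat.mulVec (ξ i t)
        + (-(bhat * μ t) + bvec ⬝ᵥ ∑ j ∈ Finset.Icc 1 (i - 1), ξ j t) • dvec
        + (cvec ⬝ᵥ (ξ (i - 1) t - ξ i t)) • gain (α ^ (i - 1) * ω₁)) :
    ∀ i : ℕ, 2 ≤ i → i ≤ p → ∀ t : ℝ,
      HasDerivAt (fun s => zetaErr e e' F ξ i s)
        ((Amat - vecMulVec (gain (α ^ (i - 1) * ω₁)) cvec).mulVec (zetaErr e e' F ξ i t)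
          + (cvec ⬝ᵥ zetaErr e e' F ξ (i - 1) t) •
              (gain (α ^ (i - 1) * ω₁) - (bvec ⬝ᵥ gain (α ^ (i - 1 - 1) * ω₁)) • bvec)
          - ∑ j ∈ Finset.Icc 1 (i - 2),
              ((bvec ⬝ᵥ gain (α ^ (j - 1) * ω₁) - bvec ⬝ᵥ gain (α ^ (j + 1 - 1) * ω₁)) *
                (cvec ⬝ᵥ zetaErr e e' F ξ j t)) • bvec
          + ((bvec ⬝ᵥ gain (α ^ (1 - 1) * ω₁)) * n t) • bvec
          + F' t • bvec) t := by
  intro i hi hip t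
  have hz : HasDerivAt (fun s ↦ ![e s, e' s, F s])
      (Amat *ᵥ ![e t, e' t, F t] - (bhat * μ t) • dvec + F' t • bvec) t := by
    convert hasDerivAt_vecCons_three (he t) (he' t) (hF t) using 1
    ext k; fin_cases k <;> simp [Amat_mulVec_vecCons, dvec, bvec, hdyn t]
  have hobs : CascadeObserver.IsObserverRHS Amat bvec cvec dvec (fun j ↦ gain (α ^ (j - 1) * ω₁))
      (bhat * μ t) (cvec ⬝ᵥ ![e t, e' t, F t] - n t) (fun j ↦ ξ j t) (fun j ↦ ξ' j t) p :=
    ⟨by simpa [cvec] using hobs1 t, fun j hj hjp ↦ hobsi j hj hjp t⟩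
  exact (CascadeObserver.hasDerivAt_error bvec (by omega) hz
    fun j hj hji ↦ hξ j hj (hji.trans hip) t).congr_deriv
    (hobs.error_deriv_eq Amat_mulVec_bvec bvec_vecMul_Amat bvec_dotProduct_dvec
      cvec_dotProduct_bvec rfl hi hip)

/-- dynamics of the level-`i` (i ≥ 2) observation errors of the
`p`-level cascade extended state observer. -/
theorem cascade_observation_error_dynamics
    (p : ℕ) (hp : 2 ≤ p) (ω₁ : ℝ) (hω₁ : 0 < ω₁) (α : ℝ) (hα : 1 < α)
    (bhat : ℝ) (hbhat : bhat ≠ 0)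
    (μ n e e' e'' F F' : ℝ → ℝ)
    (he : ∀ t : ℝ, HasDerivAt e (e' t) t)
    (he' : ∀ t : ℝ, HasDerivAt e' (e'' t) t)
    (hF : ∀ t : ℝ, HasDerivAt F (F' t) t)
    (hdyn : ∀ t : ℝ, e'' t = F t - bhat * μ t)
    (ξ ξ' : ℕ → ℝ → Fin 3 → ℝ)
    (hξ : ∀ i : ℕ, 1 ≤ i → i ≤ p → ∀ t : ℝ, HasDerivAt (ξ i) (ξ' i t) t)
    (hobs1 : ∀ t : ℝ, ξ' 1 t =
      Amat.mulVec (ξ 1 t) - (bhat * μ t) • dvec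
        + (((e t - n t) - cvec ⬝ᵥ ξ 1 t)) • gain (α ^ (1 - 1) * ω₁))
    (hobsi : ∀ i : ℕ, 2 ≤ i → i ≤ p → ∀ t : ℝ, ξ' i t =
      Amat.mulVec (ξ i t)
        + (-(bhat * μ t) + bvec ⬝ᵥ ∑ j ∈ Finset.Icc 1 (i - 1), ξ j t) • dvec
        + (cvec ⬝ᵥ (ξ (i - 1) t - ξ i t)) • gain (α ^ (i - 1) * ω₁)) :
    ∀ i : ℕ, 2 ≤ i → i ≤ p → ∀ t : ℝ,
      HasDerivAt (fun s => zetaErr e e' F ξ i s)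
        ((Amat - vecMulVec (gain (α ^ (i - 1) * ω₁)) cvec).mulVec (zetaErr e e' F ξ i t)
          + (cvec ⬝ᵥ zetaErr e e' F ξ (i - 1) t) •
              (gain (α ^ (i - 1) * ω₁) - (bvec ⬝ᵥ gain (α ^ (i - 1 - 1) * ω₁)) • bvec)
          - ∑ j ∈ Finset.Icc 1 (i - 2),
              ((bvec ⬝ᵥ gain (α ^ (j - 1) * ω₁) - bvec ⬝ᵥ gain (α ^ (j + 1 - 1) * ω₁)) *
                (cvec ⬝ᵥ zetaErr e e' F ξ j t)) • bvec
          + ((bvec ⬝ᵥ gain (α ^ (1 - 1) * ω₁)) * n t) • bvec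
          + F' t • bvec) t :=
  cascade_observation_error_dynamics_general p ω₁ α bhat μ n e e' e'' F F' he he' hF hdyn ξ ξ' hξ
    hobs1 hobsi
end
end

section
/- Let p ≥ 2, ω₁ > 0, α > 1, ω_j = α^{j−1}ω₁, and let H_ζ ∈ ℝ^{3p×3p} be the aggregated cascade-observer error matrix: block lower triangular with diagonal blocks A − l(ω_i)·cᵀ, blocks (l(ω_i) − b·(bᵀl(ω_{i−1})))·cᵀ at positions (i, i−1), and blocks −b·(bᵀl(ω_j) − bᵀl(ω_{j+1}))·cᵀ at positions (i, j) for j ≤ i−2, where A = [[0,1,0],[0,0,1],[0,0,0]], b = (0,0,1)ᵀ, c = (1,0,0)ᵀ, l(ω) = (3ω, 3ω², ω³)ᵀ. Let T_χ = blkdiag(Φ₁, …, Φ_p) with Φ_i = diag((α^{i−1}ω₁)^{−2}, (α^{i−1}ω₁)^{−1}, 1). Then T_χ^{−1}·H_ζ·T_χ = ω₁·H_χ, where the matrix H_χ ∈ ℝ^{3p×3p} depends only on α (its entries are independent of ω₁), and the eigenvalues of H_χ belong to {−1, −α, …, −α^{p−1}}. -/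
open Matrix Polynomial

noncomputable section

/-- The aggregated cascade-observer error matrix `H_ζ ∈ ℝ^{3p×3p}` (block index
`i : Fin p` corresponds to cascade level `i+1` with bandwidth `ωᵢ₊₁ = αⁱω₁`):
block lower triangular with diagonal blocks `A − l(ωᵢ)cᵀ`, blocks
`(l(ωᵢ) − b(bᵀl(ω_{i−1})))cᵀ` at positions `(i, i−1)`, and blocks
`−b(bᵀl(ωⱼ) − bᵀl(ω_{j+1}))cᵀ` at positions `(i, j)` for `j ≤ i−2`. -/
def Hzeta (p : ℕ) (α ω₁ : ℝ) : Matrix (Fin p × Fin 3) (Fin p × Fin 3) ℝ :=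
  fun q r =>
    if q.1 = r.1 then
      (Amat - vecMulVec (gain (α ^ (q.1 : ℕ) * ω₁)) cvec) q.2 r.2
    else if (r.1 : ℕ) + 1 = (q.1 : ℕ) then
      ((gain (α ^ (q.1 : ℕ) * ω₁) - (bvec ⬝ᵥ gain (α ^ (r.1 : ℕ) * ω₁)) • bvec) q.2) * cvec r.2
    else if (r.1 : ℕ) + 2 ≤ (q.1 : ℕ) then
      -(bvec q.2 * (bvec ⬝ᵥ gain (α ^ (r.1 : ℕ) * ω₁)
          - bvec ⬝ᵥ gain (α ^ ((r.1 : ℕ) + 1) * ω₁)) * cvec r.2)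
    else 0

/-- The block-diagonal scaling matrix `T_χ = blkdiag(Φ₁, …, Φ_p)` with
`Φᵢ = diag((α^{i−1}ω₁)⁻², (α^{i−1}ω₁)⁻¹, 1)`. -/
def Tchi (p : ℕ) (α ω₁ : ℝ) : Matrix (Fin p × Fin 3) (Fin p × Fin 3) ℝ :=
  Matrix.diagonal fun q : Fin p × Fin 3 =>
    ![((α ^ (q.1 : ℕ) * ω₁) ^ 2)⁻¹, (α ^ (q.1 : ℕ) * ω₁)⁻¹, 1] q.2

/-- The scaled matrix `H_χ`, depending only on `α`. -/
def HchiMat (p : ℕ) (α : ℝ) : Matrix (Fin p × Fin 3) (Fin p × Fin 3) ℝ :=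
  fun q r =>
    if q.1 = r.1 then
      α ^ (q.1 : ℕ) * (!![-3,1,0; -3,0,1; -1,0,0] : Matrix (Fin 3) (Fin 3) ℝ) q.2 r.2
    else if (r.1 : ℕ) + 1 = (q.1 : ℕ) then
      ![3 * α ^ ((q.1 : ℕ) + 2), 3 * α ^ ((q.1 : ℕ) + 2),
          α ^ (r.1 : ℕ) * (α ^ 3 - 1)] q.2 * cvec r.2
    else if (r.1 : ℕ) + 2 ≤ (q.1 : ℕ) then
      bvec q.2 * (α ^ (r.1 : ℕ) * (α ^ 3 - 1)) * cvec r.2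
    else 0

lemma inv_diag_field {n : Type*} [Fintype n] [DecidableEq n]
    (d : n → ℝ) (hd : ∀ i, d i ≠ 0) :
    (Matrix.diagonal d)⁻¹ = Matrix.diagonal (fun i => (d i)⁻¹) := by
  apply Matrix.inv_eq_left_inv
  rw [Matrix.diagonal_mul_diagonal]
  have : (fun i => (d i)⁻¹ * d i) = fun _ => (1:ℝ) := funext fun i => inv_mul_cancel₀ (hd i)
  rw [this, Matrix.diagonal_one]

lemma eval_charpoly' {n : Type*} [Fintype n] [DecidableEq n]
    (M : Matrix n n ℂ) (μ : ℂ) :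
    M.charpoly.eval μ = (Matrix.of fun i j => (if i = j then μ else 0) - M i j).det := by
  rw [Matrix.charpoly, ← Polynomial.coe_evalRingHom, RingHom.map_det]
  congr 1
  ext i j
  by_cases h : i = j
  · subst h; simp [charmatrix_apply_eq]
  · simp [charmatrix_apply_ne _ _ _ h, h]

lemma cascade_scaling_eq (p : ℕ) (α : ℝ) (hα : 1 < α) (ω₁ : ℝ) (hω : 0 < ω₁) :
    (Tchi p α ω₁)⁻¹ * Hzeta p α ω₁ * Tchi p α ω₁ = ω₁ • HchiMat p α := by
  have hα0 : (0:ℝ) < α := lt_trans one_pos hα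
  have hαne : α ≠ 0 := ne_of_gt hα0
  have hωne : ω₁ ≠ 0 := ne_of_gt hω
  have hd : ∀ q : Fin p × Fin 3,
      (![((α ^ (q.1 : ℕ) * ω₁) ^ 2)⁻¹, (α ^ (q.1 : ℕ) * ω₁)⁻¹, 1] : Fin 3 → ℝ) q.2 ≠ 0 := by
    rintro ⟨i, a⟩
    fin_cases a <;> simp [hαne, hωne]
  have hinv : (Tchi p α ω₁)⁻¹ = Matrix.diagonal
      (fun q : Fin p × Fin 3 =>
        (![((α ^ (q.1 : ℕ) * ω₁) ^ 2)⁻¹, (α ^ (q.1 : ℕ) * ω₁)⁻¹, 1] q.2)⁻¹) :=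
    inv_diag_field _ hd
  rw [hinv, Tchi]
  ext q r
  obtain ⟨i, a⟩ := q
  obtain ⟨j, b⟩ := r
  simp only [Matrix.mul_diagonal, Matrix.diagonal_mul, Matrix.smul_apply, smul_eq_mul]
  simp only [Hzeta, HchiMat]
  by_cases hij : i = j
  · subst hij
    simp only [if_pos rfl]
    fin_cases a <;> fin_cases b <;>
      (try simp [Amat, gain, cvec, vecMulVec, Matrix.vecHead, Matrix.vecTail, hαne, hωne]) <;>
      (try field_simp) <;> try ring
  · have hij' : (i : Fin p) ≠ j := hij
    simp only [if_neg hij']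
    by_cases hji : (j : ℕ) + 1 = (i : ℕ)
    · simp only [if_pos hji]
      rw [← hji]
      fin_cases a <;> fin_cases b <;>
        (try simp [gain, cvec, bvec, Matrix.vecHead, Matrix.vecTail, hαne, hωne]) <;>
        (try field_simp) <;> try ring
    · simp only [if_neg hji]
      by_cases h2 : (j : ℕ) + 2 ≤ (i : ℕ)
      · simp only [if_pos h2]
        fin_cases a <;> fin_cases b <;>
          (try simp [gain, cvec, bvec, Matrix.vecHead, Matrix.vecTail, hαne, hωne]) <;>
          (try field_simp) <;> try ring
      · simp only [if_neg h2, mul_zero, zero_mul]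

lemma cascade_eigs (p : ℕ) (α : ℝ) (μ : ℂ)
    (h : Polynomial.aeval μ (HchiMat p α).charpoly = 0) : ∃ j < p, μ = -(α : ℂ) ^ j := by
  set N : Matrix (Fin p × Fin 3) (Fin p × Fin 3) ℂ :=
    (HchiMat p α).map (algebraMap ℝ ℂ) with hN
  have hch : N.charpoly.eval μ = 0 := by
    rw [hN, Matrix.charpoly_map]
    rwa [Polynomial.aeval_def, ← Polynomial.eval_map] at h
  set S : Matrix (Fin p × Fin 3) (Fin p × Fin 3) ℂ :=
    Matrix.of fun q r => (if q = r then μ else 0) - N q r with hS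
  have hdet : S.det = 0 := by rw [← eval_charpoly' N μ]; exact hch
  have hBT : S.BlockTriangular (OrderDual.toDual ∘ fun q : Fin p × Fin 3 => q.1) := by
    intro q r hlt
    have hlt' : q.1 < r.1 := hlt
    have h1 : q ≠ r := fun e => absurd (congrArg Prod.fst e) (ne_of_lt hlt')
    have h2 : q.1 ≠ r.1 := ne_of_lt hlt'
    have hv : (q.1 : ℕ) < (r.1 : ℕ) := hlt'
    have h3 : ¬((r.1 : ℕ) + 1 = (q.1 : ℕ)) := by omega
    have h4 : ¬((r.1 : ℕ) + 2 ≤ (q.1 : ℕ)) := by omega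
    simp [hS, hN, HchiMat, h1, h2, h3, h4, Matrix.map_apply]
  have hdet2 : S.det = ∏ k : (Fin p)ᵒᵈ,
      (S.toSquareBlock (OrderDual.toDual ∘ fun q : Fin p × Fin 3 => q.1) k).det :=
    hBT.det_fintype
  have hblock : ∀ k : (Fin p)ᵒᵈ,
      (S.toSquareBlock (OrderDual.toDual ∘ fun q : Fin p × Fin 3 => q.1) k).det =
        (μ + (α : ℂ) ^ ((OrderDual.ofDual k : Fin p) : ℕ)) ^ 3 := by
    intro k
    set i : Fin p := OrderDual.ofDual k with hi
    set c : ℂ := (α : ℂ) ^ (i : ℕ) with hc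
    let e : Fin 3 ≃ {q : Fin p × Fin 3 //
        (OrderDual.toDual ∘ fun q : Fin p × Fin 3 => q.1) q = k} :=
      { toFun := fun a => ⟨(i, a), rfl⟩
        invFun := fun s => s.1.2
        left_inv := fun a => rfl
        right_inv := fun s => Subtype.ext (Prod.ext (congrArg OrderDual.ofDual s.2).symm rfl) }
    rw [← Matrix.det_submatrix_equiv_self e]
    have heq : (S.toSquareBlock
          (OrderDual.toDual ∘ fun q : Fin p × Fin 3 => q.1) k).submatrix e e =
        !![μ + 3*c, -c, 0; 3*c, μ, -c; c, 0, μ] := by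
      ext a b
      fin_cases a <;> fin_cases b <;>
        (simp [Matrix.toSquareBlock, Matrix.toSquareBlockProp, hS, hN, HchiMat, e,
          Prod.ext_iff, Matrix.vecHead, Matrix.vecTail, Matrix.map_apply, hc]
         <;> push_cast <;> ring)
    rw [heq, Matrix.det_fin_three]
    simp
    ring
  rw [hdet2] at hdet
  simp_rw [hblock] at hdet
  obtain ⟨k, -, hk⟩ := Finset.prod_eq_zero_iff.mp hdet
  refine ⟨((OrderDual.ofDual k : Fin p) : ℕ), (OrderDual.ofDual k : Fin p).isLt, ?_⟩
  have := pow_eq_zero_iff (n := 3) (by norm_num) |>.mp hk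
  linear_combination this

/-- `T_χ⁻¹ H_ζ T_χ = ω₁ • H_χ` for a matrix `H_χ` that depends only on `α`
(its entries are independent of `ω₁`, i.e. a single `H_χ` works for all `ω₁ > 0`), and the
complex eigenvalues of `H_χ` belong to `{−1, −α, …, −α^{p−1}}`. -/
theorem cascade_bandwidth_scaling
    (p : ℕ) (hp : 2 ≤ p) (α : ℝ) (hα : 1 < α) :
    ∃ Hchi : Matrix (Fin p × Fin 3) (Fin p × Fin 3) ℝ,
      (∀ ω₁ : ℝ, 0 < ω₁ →
        (Tchi p α ω₁)⁻¹ * Hzeta p α ω₁ * Tchi p α ω₁ = ω₁ • Hchi) ∧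
      (∀ μ : ℂ, Polynomial.aeval μ Hchi.charpoly = 0 → ∃ j < p, μ = -(α : ℂ) ^ j) := by
  exact ⟨HchiMat p α, fun ω₁ hω => cascade_scaling_eq p α hα ω₁ hω,
    fun μ h => cascade_eigs p α μ h⟩
end
end

section
/- (Remark on nominal conditions.) In the setting of the observer part of Theorem 1, assume additionally that the measurement noise vanishes identically, n ≡ 0. Then for every p ≥ 2, α > 1, and Ψ > 0 there exists a constant C > 0, independent of ω₁, such that for every first-level bandwidth ω₁ ≥ 1 and every solution (e, F*, μ, ξ₁, …, ξ_p) of the cascade observer equations with |(F*)'(t)| ≤ Ψ for all t ≥ t₀: limsup_{t→∞} ‖z(t) − ξ_p(t) − b·(bᵀ∑_{j=1}^{p−1} ξ_j(t))‖ ≤ C/ω₁. In particular, the asymptotic observation error bound can be made arbitrarily small by increasing ω₁. -/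
/-!
Write the error of level `i` of the cascade as `Zᵢ = (e - ξᵢ₁, e' - ξᵢ₂, F* - ξᵢ₃ - Σ_{j<i} ξⱼ₃)`.
It obeys `Zᵢ' = (A - l(ωᵢ) cᵀ) Zᵢ + l(ωᵢ) qᵢ + b Gᵢ`, where `qᵢ` is the first component of
`Zᵢ₋₁` (zero for `i = 1`) and `Gᵢ = F*' - Σ_{j<i} ξⱼ₃'`. The matrix `A - l(ω) cᵀ` has the triple
eigenvalue `-ω`, so in Jordan coordinates the level is a chain of three stable first-order lags,
and a Grönwall comparison gives `limsup |Zᵢ₁| ≤ 7 limsup |qᵢ| + limsup |Gᵢ| / ωᵢ³`, with the other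
two components larger by at most `3ωᵢ` and `3ωᵢ²`. Since `ξⱼ₃' = ωⱼ³ (Zⱼ₁ - qⱼ)`, induction along
the cascade gives `limsup |Zᵢ₁| ≤ Kᵢ Ψ / ω₁³` and `limsup |Gᵢ| ≤ (1 + Lᵢ) Ψ` with `Kᵢ, Lᵢ`
depending only on `α` and `i`; at the last level `3 ωₚ² Kₚ Ψ / ω₁³ = 3 α^(2(p-1)) Kₚ Ψ / ω₁`.
-/

open Matrix Filter

noncomputable section

open Topology

/-- `limsup_{t → ∞} |f t| ≤ c`, stated so that it also asserts that `f` is eventually bounded. -/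
def LimsupAbsLE (f : ℝ → ℝ) (c : ℝ) : Prop :=
  ∀ ε > 0, ∀ᶠ t in atTop, |f t| ≤ c + ε

namespace LimsupAbsLE

variable {f g : ℝ → ℝ} {c d : ℝ}

theorem nonneg (h : LimsupAbsLE f c) : 0 ≤ c :=
  le_of_forall_pos_le_add fun ε hε => (abs_nonneg _).trans (h ε hε).exists.choose_spec

theorem mono (h : LimsupAbsLE f c) (hcd : c ≤ d) : LimsupAbsLE f d := fun ε hε =>
  (h ε hε).mono fun _ ht => ht.trans (by linarith)

theorem congr (h : LimsupAbsLE f c) (hfg : ∀ t, f t = g t) : LimsupAbsLE g c := fun ε hε =>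
  (h ε hε).mono fun t ht => hfg t ▸ ht

theorem of_eventually (h : ∀ᶠ t in atTop, |f t| ≤ c) : LimsupAbsLE f c := fun ε hε =>
  h.mono fun _ ht => ht.trans (by linarith)

theorem zero : LimsupAbsLE 0 0 :=
  of_eventually <| .of_forall fun _ => by simp

theorem add (hf : LimsupAbsLE f c) (hg : LimsupAbsLE g d) :
    LimsupAbsLE (fun t => f t + g t) (c + d) := fun ε hε => by
  filter_upwards [hf (ε / 2) (by positivity), hg (ε / 2) (by positivity)] with t hft hgt
  linarith [abs_add_le (f t) (g t)]

theorem sub (hf : LimsupAbsLE f c) (hg : LimsupAbsLE g d) :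
    LimsupAbsLE (fun t => f t - g t) (c + d) := fun ε hε => by
  filter_upwards [hf (ε / 2) (by positivity), hg (ε / 2) (by positivity)] with t hft hgt
  linarith [abs_sub (f t) (g t)]

theorem const_mul (hf : LimsupAbsLE f c) {k : ℝ} (hk : 0 ≤ k) :
    LimsupAbsLE (fun t => k * f t) (k * c) := fun ε hε => by
  filter_upwards [hf (ε / (k + 1)) (by positivity)] with t ht
  have hkε : k * (ε / (k + 1)) ≤ ε := by
    rw [mul_div_assoc', div_le_iff₀ (by positivity)]
    nlinarith
  calc |k * f t| = k * |f t| := by rw [abs_mul, abs_of_nonneg hk]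
    _ ≤ k * (c + ε / (k + 1)) := by gcongr
    _ ≤ k * c + ε := by linarith

end LimsupAbsLE

theorem limsup_norm_le_of_forall_limsupAbsLE {ι : Type*} [Fintype ι] [Nonempty ι]
    {f : ℝ → ι → ℝ} {c : ℝ} (h : ∀ i, LimsupAbsLE (fun t => f t i) c) :
    limsup (fun t => ‖f t‖) atTop ≤ c := by
  refine le_of_forall_pos_le_add fun ε hε =>
    limsup_le_of_le (isCoboundedUnder_le_of_le atTop fun t => norm_nonneg _) ?_
  filter_upwards [eventually_all.2 fun i => h i ε hε] with t ht
  exact (pi_norm_le_iff_of_nonempty _).2 fun i => (Real.norm_eq_abs _).trans_le (ht i)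

theorem tendsto_gronwallBound_of_neg {δ K ε : ℝ} (hK : K < 0) :
    Tendsto (gronwallBound δ K ε) atTop (𝓝 (-(ε / K))) := by
  have hexp : Tendsto (fun x => Real.exp (K * x)) atTop (𝓝 0) :=
    Real.tendsto_exp_atBot.comp ((tendsto_const_mul_atBot_of_neg hK).2 tendsto_id)
  rw [gronwallBound_of_K_ne_0 hK.ne]
  convert (hexp.const_mul δ).add ((hexp.sub_const 1).const_mul (ε / K)) using 2
  ring

theorem eventually_le_of_hasDerivAt_le {y y' : ℝ → ℝ} {K M c : ℝ} (hK : K < 0)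
    (h : ∀ᶠ t in atTop, HasDerivAt y (y' t) t ∧ y' t ≤ K * y t + M) (hc : -(M / K) < c) :
    ∀ᶠ t in atTop, y t ≤ c := by
  obtain ⟨T, hT⟩ := eventually_atTop.1 h
  have hgronwall : ∀ x ≥ T, y x ≤ gronwallBound (y T) K M (x - T) := fun x hx =>
    le_gronwallBound_of_liminf_deriv_right_le (b := x)
      (fun s hs => (hT s hs.1).1.continuousAt.continuousWithinAt)
      (fun s hs _ hr => (hT s hs.1).1.hasDerivWithinAt.liminf_right_slope_le hr)
      le_rfl (fun s hs => (hT s hs.1).2) x ⟨hx, le_rfl⟩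
  have hshift : Tendsto (fun x => x - T) atTop atTop :=
    tendsto_atTop_add_const_right _ _ tendsto_id
  filter_upwards [eventually_ge_atTop T,
    ((tendsto_gronwallBound_of_neg hK).comp hshift).eventually_lt_const hc] with x hx hlt
  exact (hgronwall x hx).trans hlt.le

theorem LimsupAbsLE.of_hasDerivAt {y g : ℝ → ℝ} {ω c : ℝ} (hω : 0 < ω)
    (hy : ∀ᶠ t in atTop, HasDerivAt y (-(ω * y t) + g t) t) (hg : LimsupAbsLE g (ω * c)) :
    LimsupAbsLE y c := by
  intro ε hε
  have hK : -ω < 0 := neg_lt_zero.2 hω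
  have hc : -((ω * c + ω * (ε / 2)) / -ω) < c + ε := by
    rw [div_neg, neg_neg, ← mul_add, mul_div_cancel_left₀ _ hω.ne']
    linarith
  have hgε := hg (ω * (ε / 2)) (by positivity)
  have hupper := eventually_le_of_hasDerivAt_le hK (hy.and hgε |>.mono fun t ⟨hyt, hgt⟩ =>
    ⟨hyt, by linarith [le_abs_self (g t)]⟩) hc
  have hlower := eventually_le_of_hasDerivAt_le hK (hy.and hgε |>.mono fun t ⟨hyt, hgt⟩ =>
    ⟨hyt.neg, by rw [Pi.neg_apply]; linarith [neg_abs_le (g t)]⟩) hc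
  filter_upwards [hupper, hlower] with t h₁ h₂
  exact abs_le.2 ⟨by linarith [Pi.neg_apply y t], h₁⟩

/-- `Z' = (A - l(ω) cᵀ) Z + l(ω) q + b G`: the error of an observer level of bandwidth `ω`
whose measured signal has error `q`. -/
def IsObserverError (ω : ℝ) (q G Z₁ Z₂ Z₃ : ℝ → ℝ) : Prop :=
  ∀ᶠ t in atTop, HasDerivAt Z₁ (Z₂ t - 3 * ω * (Z₁ t - q t)) t ∧
    HasDerivAt Z₂ (Z₃ t - 3 * ω ^ 2 * (Z₁ t - q t)) t ∧
    HasDerivAt Z₃ (G t - ω ^ 3 * (Z₁ t - q t)) t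

theorem IsObserverError.limsupAbsLE {ω Q M B : ℝ} {q G Z₁ Z₂ Z₃ : ℝ → ℝ} (hω : 0 < ω)
    (h : IsObserverError ω q G Z₁ Z₂ Z₃) (hq : LimsupAbsLE q Q) (hG : LimsupAbsLE G M)
    (hB : 7 * Q + M / ω ^ 3 ≤ B) :
    LimsupAbsLE Z₁ B ∧ LimsupAbsLE Z₂ (3 * ω * B) ∧ LimsupAbsLE Z₃ (3 * ω ^ 2 * B) := by
  have hQ : 0 ≤ Q := hq.nonneg
  have hM : 0 ≤ M / ω ^ 3 := div_nonneg hG.nonneg (by positivity)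
  -- `A - l(ω) cᵀ` has the triple eigenvalue `-ω`; in these Jordan coordinates the error
  -- system is a chain of three first-order lags `w₃ → w₂ → Z₁`.
  set w₃ := fun t => Z₃ t / ω ^ 2 - Z₂ t / ω + Z₁ t
  set w₂ := fun t => Z₂ t / ω - 2 * Z₁ t
  have hw₃ : LimsupAbsLE w₃ (Q + M / ω ^ 3) := by
    refine .of_hasDerivAt hω (g := fun t => ω * (q t + (ω ^ 3)⁻¹ * G t))
      (h.mono fun t ⟨h₁, h₂, h₃⟩ => ?_) ?_
    · refine (((h₃.div_const (ω ^ 2)).fun_sub (h₂.div_const ω)).fun_add h₁).congr_deriv ?_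
      simp only [w₃]
      field_simp
      ring
    · convert (hq.add (hG.const_mul (k := (ω ^ 3)⁻¹) (by positivity))).const_mul hω.le
        using 2
      ring
  have hw₂ : LimsupAbsLE w₂ (4 * Q + M / ω ^ 3) := by
    refine .of_hasDerivAt hω (g := fun t => ω * (w₃ t - 3 * q t))
      (h.mono fun t ⟨h₁, h₂, _⟩ => ?_) ?_
    · refine ((h₂.div_const ω).fun_sub (h₁.const_mul 2)).congr_deriv ?_
      simp only [w₂, w₃]
      field_simp
      ring
    · convert (hw₃.sub (hq.const_mul (by norm_num : (0 : ℝ) ≤ 3))).const_mul hω.le using 2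
      ring
  have hZ₁ : LimsupAbsLE Z₁ (7 * Q + M / ω ^ 3) := by
    refine .of_hasDerivAt hω (g := fun t => ω * (w₂ t + 3 * q t))
      (h.mono fun t ⟨h₁, _, _⟩ => h₁.congr_deriv ?_) ?_
    · simp only [w₂]
      field_simp
      ring
    · convert (hw₂.add (hq.const_mul (by norm_num : (0 : ℝ) ≤ 3))).const_mul hω.le using 2
      ring
  have hw₂B := hw₂.mono (by linarith : 4 * Q + M / ω ^ 3 ≤ B)
  have hw₃B := hw₃.mono (by linarith : Q + M / ω ^ 3 ≤ B)
  have hZ₁B := hZ₁.mono hB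
  refine ⟨hZ₁B, ?_, ?_⟩
  · refine ((hw₂B.add (hZ₁B.const_mul zero_le_two)).const_mul hω.le).mono (by linarith)
      |>.congr fun t => ?_
    simp only [w₂]
    field_simp
    ring
  · refine (((hw₃B.add hw₂B).add hZ₁B).const_mul (sq_nonneg ω)).mono (by linarith)
      |>.congr fun t => ?_
    simp only [w₂, w₃]
    field_simp
    ring

/-- Level `n + 1` of the cascade sees an input error bounded by `Ψ K / ω₁ ^ 3` and a
disturbance bounded by `Ψ (1 + L)`, where `(K, L) = cascadeConst α n`. -/
def cascadeConst (α : ℝ) : ℕ → ℝ × ℝ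
  | 0 => (0, 0)
  | n + 1 =>
    let c := cascadeConst α n
    (7 * c.1 + 1 + c.2, c.2 + α ^ (3 * n) * (8 * c.1 + 1 + c.2))

theorem cascadeConst_nonneg {α : ℝ} (hα : 0 ≤ α) (n : ℕ) :
    0 ≤ (cascadeConst α n).1 ∧ 0 ≤ (cascadeConst α n).2 := by
  induction n with
  | zero => simp [cascadeConst]
  | succ n ih =>
    obtain ⟨hK, hL⟩ := ih
    constructor <;> simp only [cascadeConst] <;> positivity

theorem cascadeConst_succ_fst_pos {α : ℝ} (hα : 0 ≤ α) (n : ℕ) :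
    0 < (cascadeConst α (n + 1)).1 := by
  obtain ⟨hK, hL⟩ := cascadeConst_nonneg hα n
  simp only [cascadeConst]
  positivity

theorem IsObserverError.cascade_step {α ω₁ Ψ : ℝ} {n : ℕ} (hα : 1 ≤ α) (hω₁ : 0 < ω₁)
    {F' q D Z₁ Z₂ Z₃ : ℝ → ℝ}
    (h : IsObserverError (α ^ n * ω₁) q (fun t => F' t - D t) Z₁ Z₂ Z₃)
    (hF' : LimsupAbsLE F' Ψ) (hq : LimsupAbsLE q ((cascadeConst α n).1 * Ψ / ω₁ ^ 3))
    (hD : LimsupAbsLE D ((cascadeConst α n).2 * Ψ)) :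
    (LimsupAbsLE Z₁ ((cascadeConst α (n + 1)).1 * Ψ / ω₁ ^ 3) ∧
      LimsupAbsLE Z₂ (3 * (α ^ n * ω₁) * ((cascadeConst α (n + 1)).1 * Ψ / ω₁ ^ 3)) ∧
      LimsupAbsLE Z₃ (3 * (α ^ n * ω₁) ^ 2 * ((cascadeConst α (n + 1)).1 * Ψ / ω₁ ^ 3))) ∧
    LimsupAbsLE (fun t => D t + (α ^ n * ω₁) ^ 3 * (Z₁ t - q t))
      ((cascadeConst α (n + 1)).2 * Ψ) := by
  obtain ⟨hK, hL⟩ := cascadeConst_nonneg (zero_le_one.trans hα) n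
  have hΨ : 0 ≤ Ψ := hF'.nonneg
  have hω₁ω : ω₁ ≤ α ^ n * ω₁ := le_mul_of_one_le_left hω₁.le (one_le_pow₀ hα)
  have hG : LimsupAbsLE (fun t => F' t - D t) ((1 + (cascadeConst α n).2) * Ψ) :=
    (hF'.sub hD).mono (by linarith)
  have hB : 7 * ((cascadeConst α n).1 * Ψ / ω₁ ^ 3) + (1 + (cascadeConst α n).2) * Ψ /
      (α ^ n * ω₁) ^ 3 ≤ (cascadeConst α (n + 1)).1 * Ψ / ω₁ ^ 3 :=
    calc _ ≤ 7 * ((cascadeConst α n).1 * Ψ / ω₁ ^ 3) + (1 + (cascadeConst α n).2) * Ψ / ω₁ ^ 3 := by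
          gcongr
      _ = _ := by simp only [cascadeConst]; ring
  obtain ⟨h₁, h₂, h₃⟩ := h.limsupAbsLE (hω₁.trans_le hω₁ω) hq hG hB
  refine ⟨⟨h₁, h₂, h₃⟩, (hD.add ((h₁.sub hq).const_mul (by positivity))).mono (le_of_eq ?_)⟩
  simp only [cascadeConst]
  rw [mul_pow, ← pow_mul, mul_comm 3 n]
  field_simp
  ring

theorem cascade_limsupAbsLE {p : ℕ} {α ω₁ Ψ : ℝ} (hα : 1 ≤ α) (hω₁ : 0 < ω₁) {F' : ℝ → ℝ}
    {q D Z₁ Z₂ Z₃ : ℕ → ℝ → ℝ} (hF' : LimsupAbsLE F' Ψ)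
    (hsys : ∀ n < p,
      IsObserverError (α ^ n * ω₁) (q n) (fun t => F' t - D n t) (Z₁ n) (Z₂ n) (Z₃ n))
    (hq₀ : q 0 = 0) (hq : ∀ n, q (n + 1) = Z₁ n) (hD₀ : D 0 = 0)
    (hD : ∀ n < p, D (n + 1) = fun t => D n t + (α ^ n * ω₁) ^ 3 * (Z₁ n t - q n t))
    {n : ℕ} (hn : n < p) :
    LimsupAbsLE (Z₁ n) ((cascadeConst α (n + 1)).1 * Ψ / ω₁ ^ 3) ∧
      LimsupAbsLE (Z₂ n) (3 * (α ^ n * ω₁) * ((cascadeConst α (n + 1)).1 * Ψ / ω₁ ^ 3)) ∧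
      LimsupAbsLE (Z₃ n) (3 * (α ^ n * ω₁) ^ 2 * ((cascadeConst α (n + 1)).1 * Ψ / ω₁ ^ 3)) := by
  have hinputs : ∀ k ≤ p, LimsupAbsLE (q k) ((cascadeConst α k).1 * Ψ / ω₁ ^ 3) ∧
      LimsupAbsLE (D k) ((cascadeConst α k).2 * Ψ) := by
    intro k hk
    induction k with
    | zero => simpa [hq₀, hD₀, cascadeConst] using LimsupAbsLE.zero
    | succ k ih =>
      obtain ⟨hqk, hDk⟩ := ih (by omega)
      obtain ⟨⟨hZ₁, -, -⟩, hD'⟩ := (hsys k hk).cascade_step hα hω₁ hF' hqk hDk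
      exact ⟨hq k ▸ hZ₁, hD k hk ▸ hD'⟩
  obtain ⟨hqn, hDn⟩ := hinputs n hn.le
  exact ((hsys n hn).cascade_step hα hω₁ hF' hqn hDn).1

theorem Amat_mulVec (v : Fin 3 → ℝ) : Amat *ᵥ v = ![v 1, v 2, 0] := by
  ext i
  fin_cases i <;> simp [Amat, mulVec, dotProduct, Fin.sum_univ_three]

theorem bvec_dotProduct (v : Fin 3 → ℝ) : bvec ⬝ᵥ v = v 2 := by
  simp [bvec, dotProduct, Fin.sum_univ_three]

theorem cvec_dotProduct (v : Fin 3 → ℝ) : cvec ⬝ᵥ v = v 0 := by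
  simp [cvec, dotProduct, Fin.sum_univ_three]

theorem isObserverError_of_hasDerivAt {ω : ℝ} {e e' F F' S S' u y : ℝ → ℝ}
    {ξ ξ' : ℝ → Fin 3 → ℝ} (he : ∀ t, HasDerivAt e (e' t) t)
    (he' : ∀ t, HasDerivAt e' (F t - S t + u t) t) (hF : ∀ᶠ t in atTop, HasDerivAt F (F' t) t)
    (hS : ∀ t, HasDerivAt S (S' t) t) (hξ : ∀ t, HasDerivAt ξ (ξ' t) t)
    (hξ' : ∀ t, ξ' t = Amat *ᵥ ξ t + u t • dvec + (y t - ξ t 0) • gain ω) :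
    IsObserverError ω (fun t => e t - y t) (fun t => F' t - S' t)
      (fun t => e t - ξ t 0) (fun t => e' t - ξ t 1) (fun t => F t - ξ t 2 - S t) := by
  filter_upwards [hF] with t hFt
  have hξi := hasDerivAt_pi.1 (hξ t)
  refine ⟨((he t).fun_sub (hξi 0)).congr_deriv ?_, ((he' t).fun_sub (hξi 1)).congr_deriv ?_,
    ((hFt.fun_sub (hξi 2)).fun_sub (hS t)).congr_deriv ?_⟩ <;>
  · simp [hξ', Amat_mulVec, dvec, gain]
    ring

/-- The signal measured by level `n + 1` of the cascade. -/
def cascadeInput (e : ℝ → ℝ) (ξ : ℕ → ℝ → Fin 3 → ℝ) : ℕ → ℝ → ℝ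
  | 0 => e
  | n + 1 => fun t => ξ (n + 1) t 0

theorem cascadeObserver_limsupAbsLE {m : ℕ} {α ω₁ Ψ : ℝ} (hα : 1 ≤ α) (hω₁ : 0 < ω₁)
    {u e e' F F' : ℝ → ℝ} {ξ ξ' : ℕ → ℝ → Fin 3 → ℝ} (he : ∀ t, HasDerivAt e (e' t) t)
    (he' : ∀ t, HasDerivAt e' (F t + u t) t) (hF : ∀ᶠ t in atTop, HasDerivAt F (F' t) t)
    (hF' : LimsupAbsLE F' Ψ) (hξ : ∀ j, 1 ≤ j → j ≤ m + 1 → ∀ t, HasDerivAt (ξ j) (ξ' j t) t)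
    (hlevel : ∀ n ≤ m, ∀ t, ξ' (n + 1) t = Amat *ᵥ ξ (n + 1) t
      + (u t + bvec ⬝ᵥ ∑ j ∈ Finset.Icc 1 n, ξ j t) • dvec
      + (cascadeInput e ξ n t - ξ (n + 1) t 0) • gain (α ^ n * ω₁)) :
    LimsupAbsLE (fun t => e t - ξ (m + 1) t 0) ((cascadeConst α (m + 1)).1 * Ψ / ω₁ ^ 3) ∧
      LimsupAbsLE (fun t => e' t - ξ (m + 1) t 1)
        (3 * (α ^ m * ω₁) * ((cascadeConst α (m + 1)).1 * Ψ / ω₁ ^ 3)) ∧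
      LimsupAbsLE (fun t => F t - ξ (m + 1) t 2 - bvec ⬝ᵥ ∑ j ∈ Finset.Icc 1 m, ξ j t)
        (3 * (α ^ m * ω₁) ^ 2 * ((cascadeConst α (m + 1)).1 * Ψ / ω₁ ^ 3)) := by
  set S : ℕ → ℝ → ℝ := fun n t => bvec ⬝ᵥ ∑ j ∈ Finset.Icc 1 n, ξ j t
  set D : ℕ → ℝ → ℝ := fun n t => bvec ⬝ᵥ ∑ j ∈ Finset.Icc 1 n, ξ' j t
  have hS : ∀ n ≤ m, ∀ t, HasDerivAt (S n) (D n t) t := fun n hn t => by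
    have hsum := HasDerivAt.fun_sum (u := Finset.Icc 1 n) fun j hj =>
      hξ j (Finset.mem_Icc.1 hj).1 (by have := (Finset.mem_Icc.1 hj).2; omega) t
    simpa only [S, D, bvec_dotProduct, Finset.sum_apply] using hasDerivAt_pi.1 hsum 2
  have hsys : ∀ n < m + 1, IsObserverError (α ^ n * ω₁) (fun t => e t - cascadeInput e ξ n t)
      (fun t => F' t - D n t) (fun t => e t - ξ (n + 1) t 0) (fun t => e' t - ξ (n + 1) t 1)
      (fun t => F t - ξ (n + 1) t 2 - S n t) := fun n hn =>
    isObserverError_of_hasDerivAt he (fun t => (he' t).congr_deriv (by ring)) hF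
      (hS n (by omega)) (hξ (n + 1) (by omega) (by omega)) (hlevel n (by omega))
  refine cascade_limsupAbsLE hα hω₁ hF' hsys (funext fun t => sub_self (e t)) (fun n => rfl)
    (funext fun t => by simp [D]) (fun n hn => funext fun t => ?_) (Nat.lt_succ_self m)
  simp only [D, Finset.sum_Icc_succ_top (Nat.le_add_left 1 n), bvec_dotProduct,
    hlevel n (by omega) t]
  simp [Amat_mulVec, dvec, gain]
  ring

/-- Remark on nominal conditions: when the measurement noise vanishes
(`n ≡ 0`), for every `p ≥ 2`, `α > 1` and disturbance-derivative bound `Ψ > 0` there is a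
constant `C > 0`, independent of `ω₁`, such that for all `ω₁ ≥ 1` and all solutions of the
cascade observer equations, `limsup_{t→∞} ‖ζ̃_p(t)‖ ≤ C/ω₁`; hence the asymptotic
observation error can be made arbitrarily small by increasing `ω₁`. -/
theorem cascade_observer_nominal_bound
    (p : ℕ) (hp : 2 ≤ p) (α : ℝ) (hα : 1 < α) (Ψ : ℝ) (hΨ : 0 < Ψ) :
    ∃ C : ℝ, 0 < C ∧
      ∀ ω₁ : ℝ, 1 ≤ ω₁ →
      ∀ (t₀ bhat : ℝ), bhat ≠ 0 →
      ∀ μ e e' e'' F F' : ℝ → ℝ,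
      (∀ t : ℝ, HasDerivAt e (e' t) t) →
      (∀ t : ℝ, HasDerivAt e' (e'' t) t) →
      (∀ t : ℝ, e'' t = F t - bhat * μ t) →
      (∀ t : ℝ, t₀ ≤ t → HasDerivAt F (F' t) t) →
      (∀ t : ℝ, t₀ ≤ t → |F' t| ≤ Ψ) →
      ∀ ξ ξ' : ℕ → ℝ → Fin 3 → ℝ,
      (∀ i : ℕ, 1 ≤ i → i ≤ p → ∀ t : ℝ, HasDerivAt (ξ i) (ξ' i t) t) →
      (∀ t : ℝ, ξ' 1 t =
        Amat.mulVec (ξ 1 t) - (bhat * μ t) • dvec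
          + ((e t - cvec ⬝ᵥ ξ 1 t)) • gain (α ^ (1 - 1) * ω₁)) →
      (∀ i : ℕ, 2 ≤ i → i ≤ p → ∀ t : ℝ, ξ' i t =
        Amat.mulVec (ξ i t)
          + (-(bhat * μ t) + bvec ⬝ᵥ ∑ j ∈ Finset.Icc 1 (i - 1), ξ j t) • dvec
          + (cvec ⬝ᵥ (ξ (i - 1) t - ξ i t)) • gain (α ^ (i - 1) * ω₁)) →
      limsup (fun t : ℝ =>
        ‖![e t, e' t, F t] - ξ p t
          - (bvec ⬝ᵥ ∑ j ∈ Finset.Icc 1 (p - 1), ξ j t) • bvec‖) atTop ≤ C / ω₁ := by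
  obtain ⟨m, rfl⟩ : ∃ m, p = m + 1 := ⟨p - 1, by omega⟩
  refine ⟨3 * α ^ (2 * m) * (cascadeConst α (m + 1)).1 * Ψ,
    by have := cascadeConst_succ_fst_pos (zero_le_one.trans hα.le) m; positivity, ?_⟩
  rintro ω₁ hω₁ t₀ bhat - μ e e' e'' F F' he he' he'' hF hF' ξ ξ' hξ hξ₁ hξᵢ
  have hlevel : ∀ n ≤ m, ∀ t, ξ' (n + 1) t = Amat *ᵥ ξ (n + 1) t
      + (-(bhat * μ t) + bvec ⬝ᵥ ∑ j ∈ Finset.Icc 1 n, ξ j t) • dvec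
      + (cascadeInput e ξ n t - ξ (n + 1) t 0) • gain (α ^ n * ω₁) := by
    rintro (_ | n) hn t
    · simpa [cascadeInput, cvec_dotProduct, sub_eq_add_neg] using hξ₁ t
    · simpa [cascadeInput, cvec_dotProduct] using hξᵢ (n + 2) (by omega) (by omega) t
  obtain ⟨h₁, h₂, h₃⟩ := cascadeObserver_limsupAbsLE hα.le (by positivity) he
    (fun t => (he' t).congr_deriv (he'' t)) (eventually_atTop.2 ⟨t₀, hF⟩)
    (.of_eventually (eventually_atTop.2 ⟨t₀, hF'⟩)) hξ hlevel
  set ω := α ^ m * ω₁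
  set B := (cascadeConst α (m + 1)).1 * Ψ / ω₁ ^ 3
  have hω : 1 ≤ ω := one_le_mul_of_one_le_of_one_le (one_le_pow₀ hα.le) hω₁
  have hB₁ : B ≤ 3 * ω * B := by nlinarith [h₁.nonneg]
  have hB₂ : 3 * ω * B ≤ 3 * ω ^ 2 * B := by nlinarith [h₁.nonneg]
  have hC : 3 * ω ^ 2 * B = 3 * α ^ (2 * m) * (cascadeConst α (m + 1)).1 * Ψ / ω₁ := by
    simp only [ω, B]
    field_simp
    ring
  refine hC ▸ limsup_norm_le_of_forall_limsupAbsLE fun i => ?_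
  fin_cases i
  · exact (h₁.mono (hB₁.trans hB₂)).congr fun t => by simp [bvec, vecHead, vecTail]
  · exact (h₂.mono hB₂).congr fun t => by simp [bvec, vecHead, vecTail]
  · exact h₃.congr fun t => by simp [bvec, vecHead, vecTail]
end
end
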